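/- Let G be a group, 𝔐 a covariant coefficient system for G over a ring R, S a G-set, s ∈ S, and g ∈ G. Then the R-linear map 𝔐(G/G_s^g) → 𝔐[s] given by x ↦ [x ⊗ gs] is an isomorphism. -/

import Mathlib

noncomputable section

universe u v w

/-- A covariant `R`-coefficient system for `G`: a covariant functor from the
category of canonical `G`-orbits (coset spaces `G/H` with `G`-equivariant maps)
to the category of left `R`-modules and linear maps. -/
structure CoeffSystem (G : Type u) [Group G] (R : Type v) [Ring R] where
  obj : Subgroup G → ModuleCat.{v} R
  map : ∀ {H K : Subgroup G} (f : G ⧸ H → G ⧸ K),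
      (∀ (g : G) (x : G ⧸ H), f (g • x) = g • f x) → (obj H →ₗ[R] obj K)
  map_id : ∀ (H : Subgroup G) (hf : ∀ (g : G) (x : G ⧸ H), id (g • x) = g • id x),
      map id hf = LinearMap.id
  map_comp : ∀ {H K L : Subgroup G} (f : G ⧸ H → G ⧸ K) (f' : G ⧸ K → G ⧸ L)
      (hf : ∀ (g : G) x, f (g • x) = g • f x) (hf' : ∀ (g : G) x, f' (g • x) = g • f' x)
      (hff' : ∀ (g : G) x, (f' ∘ f) (g • x) = g • (f' ∘ f) x),
      map (f' ∘ f) hff' = (map f' hf').comp (map f hf)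

variable {G : Type u} [Group G] {R : Type v} [Ring R]
variable {S : Type w} [MulAction G S]

/-- `μ(g, G_s)` transported along the identification of `G/G_s^g` with
`G/G_{g•s}`: the equivariant map `G ⧸ stab(g • s) → G ⧸ stab s`, `x·stab(g•s) ↦ xg·stab s`. -/
def muBar (g : G) (s : S) :
    G ⧸ MulAction.stabilizer G (g • s) → G ⧸ MulAction.stabilizer G s :=
  Quotient.map' (· * g) (fun a b hab => by
    rw [QuotientGroup.leftRel_apply] at hab ⊢
    rw [MulAction.mem_stabilizer_iff] at hab ⊢
    have e : (a * g)⁻¹ * (b * g) = g⁻¹ * (a⁻¹ * b) * g := by group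
    rw [e, mul_smul, mul_smul, hab, inv_smul_smul])

theorem muBar_equivariant (g : G) (s : S) :
    ∀ (g' : G) (x : G ⧸ MulAction.stabilizer G (g • s)),
      muBar g s (g' • x) = g' • muBar g s x := by
  intro g' x
  refine Quotient.inductionOn' x fun a => ?_
  show muBar g s (QuotientGroup.mk (g' * a)) = QuotientGroup.mk (g' * (a * g))
  show QuotientGroup.mk ((g' * a) * g) = QuotientGroup.mk (g' * (a * g))
  rw [mul_assoc]

open DirectSum

/-- The ambient module `⨁_{t ∈ Gs} 𝔐(G/G_t) ⊗ R{t}` of the orbit module construction: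
the direct sum over the points `t = gs` of the orbit of `s` (equivalently over the
cosets `gG_s ∈ G/G_s`) of the modules `𝔐(G/G_s^g) = 𝔐(G/G_t)`. -/
abbrev OrbitAmbient (M : CoeffSystem G R) (s : S) : Type _ :=
  ⨁ (t : MulAction.orbit G s), M.obj (MulAction.stabilizer G t.val)

instance (s : S) : DecidableEq ↥(MulAction.orbit G s) := Classical.decEq _

theorem smul_mem_orbit_of_mem {s u : S} (hu : u ∈ MulAction.orbit G s) (g : G) :
    g • u ∈ MulAction.orbit G s := by
  obtain ⟨g₀, hg₀⟩ := hu
  exact ⟨g * g₀, by simp only []; rw [mul_smul]; simp only at hg₀; rw [hg₀]⟩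

/-- The submodule `J_𝔐[u]` of relations: generated by all elements
`x ⊗ gu − 𝔐(μ(g,G_u))(x) ⊗ u`, for `u` a point of the orbit of `s`. -/
def Jrel (M : CoeffSystem G R) (s : S) (u : S) (hu : u ∈ MulAction.orbit G s) :
    Submodule R (OrbitAmbient M s) :=
  Submodule.span R
    {z | ∃ (g : G) (x : M.obj (MulAction.stabilizer G (g • u))),
      z = DirectSum.of (fun t : MulAction.orbit G s => M.obj (MulAction.stabilizer G t.val))
            ⟨g • u, smul_mem_orbit_of_mem hu g⟩ x
        - DirectSum.of (fun t : MulAction.orbit G s => M.obj (MulAction.stabilizer G t.val))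
            ⟨u, hu⟩ (M.map (muBar g u) (muBar_equivariant g u) x)}

/-- The orbit module `𝔐[s]`. -/
def OrbitModule (M : CoeffSystem G R) (s : S) : Type _ :=
  OrbitAmbient M s ⧸ Jrel M s s (MulAction.mem_orbit_self s)

instance (M : CoeffSystem G R) (s : S) : AddCommGroup (OrbitModule M s) :=
  inferInstanceAs (AddCommGroup (OrbitAmbient M s ⧸ Jrel M s s (MulAction.mem_orbit_self s)))

instance (M : CoeffSystem G R) (s : S) : Module R (OrbitModule M s) :=
  inferInstanceAs (Module R (OrbitAmbient M s ⧸ Jrel M s s (MulAction.mem_orbit_self s)))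

end

/-!
Every point of the orbit is `h • s`, and the coset maps `aG_{h•s} ↦ ahG_s` let `𝔐` carry each
summand `𝔐(G/G_{h•s})` onto `𝔐(G/G_s)`, independently of the choice of `h`. Adding these up gives
a retraction of the ambient direct sum onto its `s`-summand which kills the relations, so the
inclusion of the `s`-summand into `𝔐[s]` is injective; the relations themselves show it is
surjective. The map of the theorem is this inclusion precomposed with the isomorphism
`𝔐(G/G_{g•s}) ≅ 𝔐(G/G_s)` induced by `g`.
-/

noncomputable section OrbitModule

open MulAction DirectSum

variable {G : Type*} [Group G] {R : Type*} [Ring R] {S : Type*} [MulAction G S]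

/-- `μ(h, G_s)`, after identifying `G_u = G_{h•s}` with `G_s^h`. -/
def quotStabilizerMap {s u : S} (h : G) (hh : h • s = u) :
    G ⧸ stabilizer G u → G ⧸ stabilizer G s :=
  Quotient.map' (· * h) fun a b hab => by
    rw [QuotientGroup.leftRel_apply, mem_stabilizer_iff] at hab ⊢
    rw [show (a * h)⁻¹ * (b * h) = h⁻¹ * (a⁻¹ * b) * h by group, mul_smul, mul_smul, hh, hab,
      ← hh, inv_smul_smul]

@[simp]
theorem quotStabilizerMap_mk {s u : S} (h : G) (hh : h • s = u) (a : G) :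
    quotStabilizerMap h hh (a : G ⧸ stabilizer G u) = ((a * h : G) : G ⧸ stabilizer G s) :=
  rfl

theorem quotStabilizerMap_smul {s u : S} (h : G) (hh : h • s = u) (b : G)
    (x : G ⧸ stabilizer G u) : quotStabilizerMap h hh (b • x) = b • quotStabilizerMap h hh x := by
  induction x using QuotientGroup.induction_on with
  | H a =>
    show ((b * a * h : G) : G ⧸ stabilizer G s) = ((b * (a * h) : G) : G ⧸ stabilizer G s)
    rw [mul_assoc]

theorem quotStabilizerMap_congr {s u : S} (h h' : G) (hh : h • s = u) (hh' : h' • s = u) :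
    quotStabilizerMap h hh = quotStabilizerMap h' hh' := by
  funext x
  induction x using QuotientGroup.induction_on with
  | H a =>
    rw [quotStabilizerMap_mk, quotStabilizerMap_mk, QuotientGroup.eq, mem_stabilizer_iff,
      show (a * h)⁻¹ * (a * h') = h⁻¹ * h' by group, mul_smul, hh', ← hh, inv_smul_smul]

theorem quotStabilizerMap_comp {s u w : S} (h h' : G) (hh : h • s = u) (hh' : h' • u = w) :
    quotStabilizerMap h hh ∘ quotStabilizerMap h' hh' =
      quotStabilizerMap (h' * h) (by rw [mul_smul, hh, hh']) := by
  funext x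
  induction x using QuotientGroup.induction_on with
  | H a => simp only [Function.comp_apply, quotStabilizerMap_mk, mul_assoc]

theorem quotStabilizerMap_one (s : S) : quotStabilizerMap (1 : G) (one_smul G s) = id := by
  funext x
  induction x using QuotientGroup.induction_on with
  | H a => simp only [quotStabilizerMap_mk, mul_one, id]

namespace CoeffSystem

variable (M : CoeffSystem G R)

theorem map_congr {H K : Subgroup G} {f f' : G ⧸ H → G ⧸ K}
    (hf : ∀ (g : G) x, f (g • x) = g • f x) (hf' : ∀ (g : G) x, f' (g • x) = g • f' x)
    (e : f = f') : M.map f hf = M.map f' hf' := by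
  subst e; rfl

def transport {s u : S} (h : G) (hh : h • s = u) :
    M.obj (stabilizer G u) →ₗ[R] M.obj (stabilizer G s) :=
  M.map (quotStabilizerMap h hh) (quotStabilizerMap_smul h hh)

theorem transport_congr {s u : S} (h h' : G) (hh : h • s = u) (hh' : h' • s = u) :
    M.transport h hh = M.transport h' hh' :=
  M.map_congr _ _ (quotStabilizerMap_congr h h' hh hh')

theorem transport_comp {s u w : S} (h h' : G) (hh : h • s = u) (hh' : h' • u = w) :
    M.transport h hh ∘ₗ M.transport h' hh' =
      M.transport (h' * h) (by rw [mul_smul, hh, hh']) := by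
  rw [transport, transport, ← M.map_comp _ _ _ _ fun b x => by
    simp only [Function.comp_apply, quotStabilizerMap_smul]]
  exact M.map_congr _ _ (quotStabilizerMap_comp h h' hh hh')

theorem transport_one (s : S) : M.transport (1 : G) (one_smul G s) = LinearMap.id := by
  rw [transport, M.map_congr _ (fun _ _ => rfl) (quotStabilizerMap_one s), M.map_id]

theorem transport_comp_transport_eq_id {s u : S} (h h' : G) (hh : h • s = u)
    (hh' : h' • u = s) : M.transport h hh ∘ₗ M.transport h' hh' = LinearMap.id := by
  rw [transport_comp, transport_congr M _ 1 _ (one_smul G s), transport_one]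

theorem transport_bijective {s u : S} (h : G) (hh : h • s = u) :
    Function.Bijective (M.transport h hh) := by
  have hinv : h⁻¹ • u = s := by rw [← hh, inv_smul_smul]
  refine Function.bijective_iff_has_inverse.mpr ⟨M.transport h⁻¹ hinv, ?_, ?_⟩
  · exact LinearMap.congr_fun (M.transport_comp_transport_eq_id h⁻¹ h hinv hh)
  · exact LinearMap.congr_fun (M.transport_comp_transport_eq_id h h⁻¹ hh hinv)

variable (s : S)

/-- `x ↦ [x ⊗ t]`, for `t` in the orbit of `s`. -/
def orbitClass (t : orbit G s) : M.obj (stabilizer G t.val) →ₗ[R] OrbitModule M s :=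
  (Jrel M s s (mem_orbit_self s)).mkQ ∘ₗ
    lof R _ (fun t : orbit G s => M.obj (stabilizer G t.val)) t

theorem orbitClass_smul (g : G) (hg : g • s ∈ orbit G s) (x : M.obj (stabilizer G (g • s))) :
    M.orbitClass s ⟨g • s, hg⟩ x =
      M.orbitClass s ⟨s, mem_orbit_self s⟩ (M.transport g rfl x) :=
  (Submodule.Quotient.eq _).mpr (Submodule.subset_span ⟨g, x, rfl⟩)

def orbitRetraction : OrbitAmbient M s →ₗ[R] M.obj (stabilizer G s) :=
  toModule R _ _ fun t => M.transport (Classical.choose t.2) (Classical.choose_spec t.2)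

theorem orbitRetraction_lof (t : orbit G s) (h : G) (hh : h • s = t.val)
    (x : M.obj (stabilizer G t.val)) :
    M.orbitRetraction s (lof R _ (fun t : orbit G s => M.obj (stabilizer G t.val)) t x) =
      M.transport h hh x := by
  rw [orbitRetraction, toModule_lof, transport_congr M _ h _ hh]

theorem jrel_le_ker_orbitRetraction :
    Jrel M s s (mem_orbit_self s) ≤ LinearMap.ker (M.orbitRetraction s) := by
  rw [Jrel, Submodule.span_le]
  rintro _ ⟨g, x, rfl⟩
  rw [SetLike.mem_coe, LinearMap.mem_ker, map_sub, ← lof_eq_of R, ← lof_eq_of R,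
    M.orbitRetraction_lof s _ g rfl, M.orbitRetraction_lof s _ 1 (one_smul G s), transport_one]
  exact sub_self _

def orbitModuleRetraction : OrbitModule M s →ₗ[R] M.obj (stabilizer G s) :=
  (Jrel M s s (mem_orbit_self s)).liftQ _ (M.jrel_le_ker_orbitRetraction s)

theorem orbitClass_self_bijective :
    Function.Bijective (M.orbitClass s ⟨s, mem_orbit_self s⟩) := by
  refine ⟨Function.LeftInverse.injective (g := M.orbitModuleRetraction s) fun x => ?_, ?_⟩
  · change M.orbitRetraction s (lof R _ _ ⟨s, mem_orbit_self s⟩ x) = x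
    rw [M.orbitRetraction_lof s _ 1 (one_smul G s), transport_one, LinearMap.id_apply]
  · rw [← LinearMap.range_eq_top, eq_top_iff]
    rintro y -
    obtain ⟨z, rfl⟩ := Submodule.Quotient.mk_surjective _ y
    induction z using DirectSum.induction_on with
    | zero => exact zero_mem _
    | add z z' hz hz' => exact add_mem hz hz'
    | of t x =>
      obtain ⟨_, h, rfl⟩ := t
      exact ⟨M.transport h rfl x, (M.orbitClass_smul s h _ x).symm⟩

end CoeffSystem

end OrbitModule

/-- The `R`-linear map `𝔐(G/G_s^g) → 𝔐[s]`, `x ↦ [x ⊗ gs]`,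
is an isomorphism. -/
theorem orbitModule_component_bijective {G : Type u} [Group G] {R : Type v} [Ring R]
    {S : Type w} [MulAction G S] (M : CoeffSystem G R) (s : S) (g : G) :
    Function.Bijective (fun x : M.obj (MulAction.stabilizer G (g • s)) =>
      (Submodule.Quotient.mk
        (DirectSum.of (fun t : MulAction.orbit G s => M.obj (MulAction.stabilizer G t.val))
          ⟨g • s, smul_mem_orbit_of_mem (MulAction.mem_orbit_self s) g⟩ x) :
        OrbitModule M s)) := by
  have hfactor :
      ⇑(M.orbitClass s ⟨g • s, smul_mem_orbit_of_mem (MulAction.mem_orbit_self s) g⟩) =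
        M.orbitClass s ⟨s, MulAction.mem_orbit_self s⟩ ∘ M.transport g rfl :=
    funext (M.orbitClass_smul s g _)
  show Function.Bijective (M.orbitClass s ⟨g • s, _⟩)
  rw [hfactor]
  exact (M.orbitClass_self_bijective s).comp (M.transport_bijective g rfl)
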